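/- arXiv:1507.08115 — 5 statements merged into one kernel-verified Lean document; each statement's English description precedes it below -/
import Mathlib

section
/- Let k be a field of characteristic different from 3, and let a1, a3 be elements of k. If both c4 = a1^4 - 24*a1*a3 = 0 and Δ = a3^3*(a1^3 - 27*a3) = 0, then a1 = 0 and a3 = 0. -/
/-- If `k` is a field of characteristic different from 3 and `c₄ = a₁⁴ - 24 a₁ a₃` and
`Δ = a₃³(a₁³ - 27 a₃)` both vanish, then `a₁ = 0` and `a₃ = 0`. -/
theorem stmt0 (k : Type*) [Field k] (hchar : ringChar k ≠ 3) (a1 a3 : k)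
    (hc4 : a1 ^ 4 - 24 * a1 * a3 = 0) (hΔ : a3 ^ 3 * (a1 ^ 3 - 27 * a3) = 0) :
    a1 = 0 ∧ a3 = 0 := by
  have h3 : (3 : k) ≠ 0 := by
    intro h
    have hdvd : ringChar k ∣ 3 :=
      (CharP.cast_eq_zero_iff k (ringChar k) 3).mp (by exact_mod_cast h)
    rcases Nat.prime_three.eq_one_or_self_of_dvd _ hdvd with h1 | h1
    · exact CharP.ringChar_ne_one h1
    · exact hchar h1
  rcases mul_eq_zero.mp hΔ with h | h
  · have ha3 : a3 = 0 := pow_eq_zero_iff (by norm_num) |>.mp h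
    subst ha3
    have : a1 ^ 4 = 0 := by linear_combination hc4
    exact ⟨pow_eq_zero_iff (by norm_num) |>.mp this, rfl⟩
  · have h4 : (3 : k) * a1 ^ 4 = 0 := by linear_combination 27 * hc4 - 24 * a1 * h
    have ha1 : a1 = 0 :=
      pow_eq_zero_iff (n := 4) (by norm_num) |>.mp ((mul_eq_zero.mp h4).resolve_left h3)
    subst ha1
    refine ⟨rfl, ?_⟩
    have h27 : (3 : k) ^ 3 * a3 = 0 := by linear_combination -h
    have := (mul_eq_zero.mp h27).resolve_left (pow_ne_zero 3 h3)
    exact this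
end

section
/- Let k be a commutative ring and R = k[x, y] the polynomial ring in two variables. Consider the k-linear map φ: R[1/x] ⊕ R[1/y] → R[1/(x*y)] given by φ(f, g) = f - g (images under the localization maps). Then the cokernel of φ is a free k-module with basis given by the images of the monomials x^{-i}*y^{-j} for i ≥ 1, j ≥ 1. -/
/-!
The image of `φ` is `A + B`, the span of the Laurent monomials `x^i y^j` with `i ≥ 0` or
`j ≥ 0`. A free module modulo the span of part of a basis is free on the remaining basis vectors,
here the monomials with `i, j ≤ -1`.
-/

open Submodule

theorem Finsupp.isCompl_supported_supported {α M R : Type*} [Semiring R] [AddCommMonoid M]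
    [Module R M] {s t : Set α} (h : IsCompl s t) :
    IsCompl (supported M R s) (supported M R t) :=
  ⟨disjoint_supported_supported h.disjoint, codisjoint_supported_supported h.codisjoint⟩

namespace Module.Basis

variable {ι R M : Type*} [Ring R] [AddCommGroup M] [Module R M]

theorem map_repr_span_image (b : Basis ι R M) (s : Set ι) :
    (span R (b '' s)).map b.repr.toLinearMap = Finsupp.supported R R s := by
  rw [map_span, ← Set.image_comp, Finsupp.supported_eq_span_single]
  congr 1
  ext; simp

noncomputable def quotientSpanImageCompl (b : Basis ι R M) (s : Set ι) :
    Basis s R (M ⧸ span R (b '' sᶜ)) :=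
  Finsupp.basisSingleOne.map <|
    (Quotient.equiv _ _ b.repr (b.map_repr_span_image sᶜ) ≪≫ₗ
      quotientEquivOfIsCompl _ _ (Finsupp.isCompl_supported_supported isCompl_compl.symm) ≪≫ₗ
      Finsupp.supportedEquivFinsupp s).symm

theorem quotientSpanImageCompl_apply (b : Basis ι R M) (s : Set ι) (i : s) :
    b.quotientSpanImageCompl s i = Submodule.Quotient.mk (b i) := by
  rw [quotientSpanImageCompl, map_apply, LinearEquiv.symm_apply_eq]
  simp only [LinearEquiv.trans_apply, Quotient.equiv_apply, mapQ_apply, LinearEquiv.coe_coe,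
    repr_self]
  erw [quotientEquivOfIsCompl_apply_mk_right _
    (⟨_, Finsupp.single_mem_supported R 1 i.2⟩ : Finsupp.supported R R s)]
  ext j
  simp [Finsupp.single_apply_left Subtype.val_injective]

end Module.Basis

theorem LinearMap.range_eq_sup_of_apply_eq_sub {R M : Type*} [Ring R] [AddCommGroup M] [Module R M]
    {A B : Submodule R M} (φ : (A × B) →ₗ[R] M) (hφ : ∀ p : A × B, φ p = p.1 - p.2) :
    range φ = A ⊔ B := by
  have : φ = A.subtype.coprod (-B.subtype) := by
    ext p <;> simp [hφ]
  rw [this, range_coprod, range_neg, Submodule.range_subtype, Submodule.range_subtype]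

/-- Čech computation of `H¹` of the weighted projective line: with `R = k[x,y]`, the
cokernel of `φ : R[1/x] ⊕ R[1/y] → R[1/(xy)]`, `(f,g) ↦ f - g`, is a free `k`-module
with basis the images of the monomials `x^{-i} y^{-j}` for `i, j ≥ 1`.  Here
`R[1/(xy)]` is identified with the Laurent polynomial ring `k[x^{±1}, y^{±1}]`
(the monomial `x^i y^j` being `Finsupp.single (i, j) 1`), `R[1/x]` with the span `A`
of the monomials with `j ≥ 0`, and `R[1/y]` with the span `B` of the monomials
with `i ≥ 0`. -/
theorem stmt4 (k : Type*) [CommRing k]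
    (A B : Submodule k (AddMonoidAlgebra k (ℤ × ℤ)))
    (hA : A = Submodule.span k {m : AddMonoidAlgebra k (ℤ × ℤ) |
      ∃ i j : ℤ, 0 ≤ j ∧ m = AddMonoidAlgebra.single (i, j) (1 : k)})
    (hB : B = Submodule.span k {m : AddMonoidAlgebra k (ℤ × ℤ) |
      ∃ i j : ℤ, 0 ≤ i ∧ m = AddMonoidAlgebra.single (i, j) (1 : k)})
    (φ : (A × B) →ₗ[k] AddMonoidAlgebra k (ℤ × ℤ))
    (hφ : ∀ p : A × B, φ p =
      (p.1 : AddMonoidAlgebra k (ℤ × ℤ)) - (p.2 : AddMonoidAlgebra k (ℤ × ℤ))) :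
    ∃ b : Module.Basis {p : ℤ × ℤ // p.1 ≤ -1 ∧ p.2 ≤ -1} k
        (AddMonoidAlgebra k (ℤ × ℤ) ⧸ LinearMap.range φ),
      ∀ p, b p = Submodule.Quotient.mk (AddMonoidAlgebra.single p.val (1 : k)) := by
  let S : Set (ℤ × ℤ) := {p | p.1 ≤ -1 ∧ p.2 ≤ -1}
  let monomial := AddMonoidAlgebra.basis (ℤ × ℤ) k
  have hrange : span k (monomial '' Sᶜ) = LinearMap.range φ := by
    rw [LinearMap.range_eq_sup_of_apply_eq_sub φ hφ, hA, hB, ← span_union]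
    congr 1
    ext m
    simp only [Set.mem_image, Set.mem_compl_iff, Set.mem_union, Set.mem_ofPred_eq, monomial, S,
      AddMonoidAlgebra.basis_apply, Prod.exists]
    constructor
    · rintro ⟨i, j, hij, rfl⟩
      by_cases hj : 0 ≤ j
      · exact Or.inl ⟨i, j, hj, rfl⟩
      · exact Or.inr ⟨i, j, by omega, rfl⟩
    · rintro (⟨i, j, h, rfl⟩ | ⟨i, j, h, rfl⟩) <;> exact ⟨i, j, by omega, rfl⟩
  exact ⟨(monomial.quotientSpanImageCompl S).map (quotEquivOfEq _ _ hrange), fun p => by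
    rw [Module.Basis.map_apply, monomial.quotientSpanImageCompl_apply S p]
    rfl⟩
end

section
/- Let k be a commutative ring and grade R = k[a1, a3] by |a1| = 1, |a3| = 3. Let T = coker(R[1/a1] ⊕ R[1/a3] → R[1/(a1*a3)]), a graded k-module with basis the monomials a1^{-i}*a3^{-j}, i, j ≥ 1. For each integer n, the bilinear pairing R_n × T_{-n-4} → k defined by multiplying and taking the coefficient of a1^{-1}*a3^{-1} is a perfect pairing of finitely generated free k-modules (i.e., it induces isomorphisms R_n ≅ Hom_k(T_{-n-4}, k) and T_{-n-4} ≅ Hom_k(R_n, k)). -/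
/-!
Under the pairing `(x, y) ↦ coeff_e (x * y)` on a group algebra `k[G]`, the monomials satisfy
`⟨X^s, X^(e - t)⟩ = δ_{st}`. For `e = (-1, -1)` the monomials `a₁^i a₃^j` of degree `n` and the
monomials `a₁^(-1-i) a₃^(-1-j)` of degree `-n - 4` are indexed by the same finite set of
exponents, so they form dual bases and the pairing is perfect.
-/

open Function Module

namespace LinearMap

variable {R M N ι : Type*} [CommRing R] [AddCommGroup M] [Module R M] [AddCommGroup N] [Module R N]
  [Finite ι] [DecidableEq ι]

theorem bijective_of_apply_basis_eq_ite (p : M →ₗ[R] N →ₗ[R] R) (b : Basis ι R M)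
    (c : Basis ι R N) (h : ∀ i j, p (b i) (c j) = if j = i then 1 else 0) : Bijective p := by
  have hp : p = (b.equiv c.dualBasis (Equiv.refl ι)).toLinearMap :=
    b.ext fun i => c.ext fun j => by
      rw [LinearEquiv.coe_coe, Basis.equiv_apply, Equiv.refl_apply, Basis.dualBasis_apply_self, h]
  rw [hp]
  exact LinearEquiv.bijective _

theorem isPerfPair_of_apply_basis_eq_ite (p : M →ₗ[R] N →ₗ[R] R) (b : Basis ι R M)
    (c : Basis ι R N) (h : ∀ i j, p (b i) (c j) = if j = i then 1 else 0) : p.IsPerfPair where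
  bijective_left := bijective_of_apply_basis_eq_ite p b c h
  bijective_right := bijective_of_apply_basis_eq_ite p.flip c b fun i j =>
    (h j i).trans (if_congr eq_comm rfl rfl)

end LinearMap

namespace AddMonoidAlgebra

theorem linearIndependent_single_one (k : Type*) {G ι : Type*} [CommRing k] {f : ι → G}
    (hf : Injective f) : LinearIndependent k fun i => single (f i) (1 : k) :=
  (AddMonoidAlgebra.basis G k).linearIndependent.comp f hf

variable (k : Type*) {G : Type*} [CommRing k] [AddCommGroup G]

noncomputable def coeffMulPairing (e : G) :
    AddMonoidAlgebra k G →ₗ[k] AddMonoidAlgebra k G →ₗ[k] k :=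
  (LinearMap.mul k (AddMonoidAlgebra k G)).compr₂ ((AddMonoidAlgebra.basis G k).coord e)

variable {k}

theorem coeffMulPairing_apply (e : G) (x y : AddMonoidAlgebra k G) :
    coeffMulPairing k e x y = (x * y).coeff e := rfl

theorem coeffMulPairing_single_single_sub [DecidableEq G] (e s t : G) :
    coeffMulPairing k e (single s 1) (single (e - t) 1) = if t = s then 1 else 0 := by
  rw [coeffMulPairing_apply, single_mul_single, one_mul, coeff_single, Finsupp.single_apply]
  exact if_congr (by rw [add_sub_left_comm, add_eq_left, sub_eq_zero, eq_comm]) rfl rfl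

variable (k) in
noncomputable def basisSpanSingle (S : Set G) :
    Basis S k (Submodule.span k (Set.range fun s : S => single (s : G) (1 : k))) :=
  .span (linearIndependent_single_one k Subtype.val_injective)

variable (k) in
noncomputable def basisSpanSingleSub (e : G) (S : Set G) :
    Basis S k (Submodule.span k (Set.range fun s : S => single (e - s) (1 : k))) :=
  .span <| linearIndependent_single_one k <|
    (sub_right_injective (b := e)).comp Subtype.val_injective

theorem isPerfPair_coeffMulPairing_span (e : G) (S : Set G) [Finite S] :
    ((coeffMulPairing k e).compl₁₂
      (Submodule.span k (Set.range fun s : S => single (s : G) (1 : k))).subtype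
      (Submodule.span k (Set.range fun s : S => single (e - s) (1 : k))).subtype).IsPerfPair := by
  classical
  refine LinearMap.isPerfPair_of_apply_basis_eq_ite _ (basisSpanSingle k S)
    (basisSpanSingleSub k e S) fun s t => ?_
  rw [LinearMap.compl₁₂_apply, Submodule.subtype_apply, Submodule.subtype_apply,
    basisSpanSingle, basisSpanSingleSub, Basis.span_apply, Basis.span_apply,
    coeffMulPairing_single_single_sub]
  exact if_congr Subtype.val_inj rfl rfl

end AddMonoidAlgebra

namespace WeightedProjectiveLine

open AddMonoidAlgebra

def exponentsOfDegree (n : ℤ) : Set (ℤ × ℤ) := {p | 0 ≤ p.1 ∧ 0 ≤ p.2 ∧ p.1 + 3 * p.2 = n}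

theorem finite_exponentsOfDegree (n : ℤ) : (exponentsOfDegree n).Finite :=
  (Set.finite_Icc (0, 0) (n, n)).subset fun p ⟨h1, h2, h⟩ =>
    ⟨⟨h1, h2⟩, ⟨by linarith, by linarith⟩⟩

theorem monomials_eq_range (k : Type*) [CommRing k] (n : ℤ) :
    {m : AddMonoidAlgebra k (ℤ × ℤ) |
      ∃ i j : ℕ, (i : ℤ) + 3 * (j : ℤ) = n ∧ m = single ((i : ℤ), (j : ℤ)) (1 : k)} =
    Set.range fun s : exponentsOfDegree n => single (s : ℤ × ℤ) (1 : k) := by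
  ext m
  constructor
  · rintro ⟨i, j, h, rfl⟩
    exact ⟨⟨(i, j), by positivity, by positivity, h⟩, rfl⟩
  · rintro ⟨⟨⟨i, j⟩, hi, hj, h⟩, rfl⟩
    lift i to ℕ using hi
    lift j to ℕ using hj
    exact ⟨i, j, h, rfl⟩

theorem dualMonomials_eq_range (k : Type*) [CommRing k] (n : ℤ) :
    {m : AddMonoidAlgebra k (ℤ × ℤ) |
      ∃ i j : ℤ, i < 0 ∧ j < 0 ∧ i + 3 * j = -n - 4 ∧ m = single (i, j) (1 : k)} =
    Set.range fun s : exponentsOfDegree n => single (((-1 : ℤ), (-1 : ℤ)) - s) (1 : k) := by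
  ext m
  constructor
  · rintro ⟨i, j, hi, hj, h, rfl⟩
    refine ⟨⟨(-1 - i, -1 - j), by omega, by omega, by omega⟩, ?_⟩
    simp
  · rintro ⟨⟨⟨i, j⟩, hi, hj, h⟩, rfl⟩
    exact ⟨-1 - i, -1 - j, by omega, by omega, by omega, rfl⟩

end WeightedProjectiveLine

open WeightedProjectiveLine AddMonoidAlgebra

/-- Serre duality for the weighted projective stack `P(1,3)`.  Grade `R = k[a₁, a₃]`
by `|a₁| = 1`, `|a₃| = 3`, and identify everything inside the Laurent ring
`k[a₁^{±1}, a₃^{±1}] = AddMonoidAlgebra k (ℤ × ℤ)` (the monomial `a₁^i a₃^j` being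
`Finsupp.single (i, j) 1`, of degree `i + 3j`).  Let `Rn` be the degree-`n` part of
`R` and `Td` the degree-`(-n-4)` part of the cokernel
`T = coker(R[1/a₁] ⊕ R[1/a₃] → R[1/(a₁a₃)])`, realized as the span of the monomials
with both exponents negative.  Then the pairing `(r, t) ↦` coefficient of
`a₁^{-1} a₃^{-1}` in `r * t` is a perfect pairing of finitely generated free
`k`-modules: it is nondegenerate on both sides and induces surjections onto the
`k`-linear duals. -/
theorem stmt5 (k : Type*) [CommRing k] (n : ℤ)
    (Rn Td : Submodule k (AddMonoidAlgebra k (ℤ × ℤ)))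
    (hR : Rn = Submodule.span k {m : AddMonoidAlgebra k (ℤ × ℤ) |
      ∃ i j : ℕ, (i : ℤ) + 3 * (j : ℤ) = n ∧ m = AddMonoidAlgebra.single ((i : ℤ), (j : ℤ)) (1 : k)})
    (hT : Td = Submodule.span k {m : AddMonoidAlgebra k (ℤ × ℤ) |
      ∃ i j : ℤ, i < 0 ∧ j < 0 ∧ i + 3 * j = -n - 4 ∧ m = AddMonoidAlgebra.single (i, j) (1 : k)}) :
    Module.Finite k Rn ∧ Module.Free k Rn ∧ Module.Finite k Td ∧ Module.Free k Td ∧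
    (∀ r : Rn, (∀ t : Td,
      ((r : AddMonoidAlgebra k (ℤ × ℤ)) * (t : AddMonoidAlgebra k (ℤ × ℤ))).coeff
        ((-1 : ℤ), (-1 : ℤ)) = 0) → r = 0) ∧
    (∀ t : Td, (∀ r : Rn,
      ((r : AddMonoidAlgebra k (ℤ × ℤ)) * (t : AddMonoidAlgebra k (ℤ × ℤ))).coeff
        ((-1 : ℤ), (-1 : ℤ)) = 0) → t = 0) ∧
    (∀ F : Td →ₗ[k] k, ∃ r : Rn, ∀ t : Td,
      ((r : AddMonoidAlgebra k (ℤ × ℤ)) * (t : AddMonoidAlgebra k (ℤ × ℤ))).coeff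
        ((-1 : ℤ), (-1 : ℤ)) = F t) ∧
    (∀ G : Rn →ₗ[k] k, ∃ t : Td, ∀ r : Rn,
      ((r : AddMonoidAlgebra k (ℤ × ℤ)) * (t : AddMonoidAlgebra k (ℤ × ℤ))).coeff
        ((-1 : ℤ), (-1 : ℤ)) = G r) := by
  subst hR hT
  rw [monomials_eq_range, dualMonomials_eq_range]
  have : Finite (exponentsOfDegree n) := (finite_exponentsOfDegree n).to_subtype
  obtain ⟨hleft, hright⟩ :=
    isPerfPair_coeffMulPairing_span (k := k) ((-1 : ℤ), (-1 : ℤ)) (exponentsOfDegree n)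
  refine ⟨.of_basis (basisSpanSingle k _), .of_basis (basisSpanSingle k _),
    .of_basis (basisSpanSingleSub k _ _), .of_basis (basisSpanSingleSub k _ _),
    fun r hr => hleft.injective ?_, fun t ht => hright.injective ?_,
    fun F => (hleft.surjective F).imp fun r hr => LinearMap.congr_fun hr,
    fun G => (hright.surjective G).imp fun t ht => LinearMap.congr_fun ht⟩
  · ext t
    rw [map_zero, LinearMap.zero_apply]
    exact hr t
  · ext r
    rw [map_zero, LinearMap.zero_apply]
    exact ht r
end

section
/- The quotient of Z^2 by the subgroup generated by (8, -8) and (3, 3) is a cyclic group of order 48. -/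
/-- The quotient of `ℤ²` by the subgroup generated by `(8, -8)` and `(3, 3)` is cyclic
of order 48. -/
theorem stmt6 :
    Nonempty (((ℤ × ℤ) ⧸ AddSubgroup.closure {((8 : ℤ), (-8 : ℤ)), ((3 : ℤ), (3 : ℤ))})
      ≃+ ZMod 48) := by
  set H : AddSubgroup (ℤ × ℤ) := AddSubgroup.closure {((8 : ℤ), (-8 : ℤ)), ((3 : ℤ), (3 : ℤ))}
  -- the map (a,b) ↦ 11a + 5b
  let f : ℤ × ℤ →+ ZMod 48 :=
    { toFun := fun p => (11 * p.1 + 5 * p.2 : ℤ)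
      map_zero' := by simp
      map_add' := by intro p q; simp [Prod.fst_add, Prod.snd_add]; ring }
  have hH : H ≤ f.ker := by
    rw [AddSubgroup.closure_le]
    rintro p (rfl | rfl) <;> simp [f, AddMonoidHom.mem_ker] <;> decide
  let f' : (ℤ × ℤ) ⧸ H →+ ZMod 48 := QuotientAddGroup.lift H f hH
  -- inverse: 1 ↦ class of (1, -2)
  let h : ℤ →+ (ℤ × ℤ) ⧸ H := zmultiplesHom _ (QuotientAddGroup.mk ((1 : ℤ), (-2 : ℤ)))
  have h48 : h (48 : ℕ) = 0 := by
    show ((48 : ℤ) • _ : (ℤ × ℤ) ⧸ H) = 0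
    rw [← QuotientAddGroup.mk_zsmul, QuotientAddGroup.eq_zero_iff]
    have : ((48 : ℤ) • ((1 : ℤ), (-2 : ℤ)) : ℤ × ℤ)
        = (9 : ℤ) • ((8 : ℤ), (-8 : ℤ)) + (-8 : ℤ) • ((3 : ℤ), (3 : ℤ)) := by decide
    rw [this]
    exact add_mem (AddSubgroup.zsmul_mem _ (AddSubgroup.subset_closure (by simp)) _)
      (AddSubgroup.zsmul_mem _ (AddSubgroup.subset_closure (by simp)) _)
  let g : ZMod 48 →+ (ℤ × ℤ) ⧸ H := ZMod.lift 48 ⟨h, h48⟩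
  refine ⟨AddMonoidHom.toAddEquiv f' g ?_ ?_⟩
  · ext p
    obtain ⟨a, b⟩ := p
    simp only [AddMonoidHom.comp_apply, AddMonoidHom.id_apply]
    show g (f (a, b)) = _
    simp only [f, AddMonoidHom.coe_mk, ZeroHom.coe_mk]

    have : g ((11 * a + 5 * b : ℤ) : ZMod 48) = h (11 * a + 5 * b) := by
      exact ZMod.lift_coe _ _ _
    rw [this]
    show ((11 * a + 5 * b : ℤ) • _ : (ℤ × ℤ) ⧸ H) = _
    rw [QuotientAddGroup.mk'_apply, ← QuotientAddGroup.mk_zsmul, QuotientAddGroup.eq]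
    have : (-((11 * a + 5 * b : ℤ) • ((1 : ℤ), (-2 : ℤ))) + (a, b) : ℤ × ℤ)
        = (-2 * a - b : ℤ) • ((8 : ℤ), (-8 : ℤ)) + (2 * a + b : ℤ) • ((3 : ℤ), (3 : ℤ)) := by
      simp [Prod.ext_iff]; constructor <;> ring
    rw [this]
    exact add_mem (AddSubgroup.zsmul_mem _ (AddSubgroup.subset_closure (by simp)) _)
      (AddSubgroup.zsmul_mem _ (AddSubgroup.subset_closure (by simp)) _)
  · ext x
    obtain ⟨k, rfl⟩ := ZMod.intCast_surjective x
    simp only [AddMonoidHom.comp_apply, AddMonoidHom.id_apply]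
    have : g ((k : ZMod 48)) = h k := ZMod.lift_coe _ _ _
    rw [this]
    show f' ((k • _ : (ℤ × ℤ) ⧸ H)) = _
    rw [← QuotientAddGroup.mk_zsmul]
    show f (k • ((1 : ℤ), (-2 : ℤ))) = _
    simp only [f, AddMonoidHom.coe_mk, ZeroHom.coe_mk, Prod.smul_fst, Prod.smul_snd,
      smul_eq_mul]
    push_cast
    ring
end

section
/- Let E, M : Z × Z → Prop be predicates satisfying for all integers a, b: (M1) M(a, b+1) → M(a, b); (M2) E(a+1, b) ∧ M(a, b) → M(a, b+1); (E1) E(a, b) → E(a, b+1); (E2) M(a-1, b+1) ∧ E(a, b+1) → E(a, b). Suppose moreover that E(a, a) holds for all a and M(a-1, a) holds for all a. Then E(a, b) and M(a, b) hold for all integers a, b. -/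
/-!
`E` spreads upward from the diagonal by `E1`. Each row `M (a - 1) ·` then spreads from its base
point `(a - 1, a)` downward by `M1` and upward by `M2`, the latter needing only `E` above the
diagonal. With `M` known everywhere, `E2` carries `E` below the diagonal as well.
-/

section DoubleInduction

variable {E M : ℤ → ℤ → Prop}

theorem E_of_le (E1 : ∀ a b : ℤ, E a b → E a (b + 1)) (hE : ∀ a : ℤ, E a a) {a b : ℤ}
    (hab : a ≤ b) : E a b :=
  Int.leInduction (hE a) (fun n _ => E1 a n) b hab

theorem M_everywhere (M1 : ∀ a b : ℤ, M a (b + 1) → M a b)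
    (M2 : ∀ a b : ℤ, E (a + 1) b → M a b → M a (b + 1))
    (hE_of_le : ∀ a b : ℤ, a ≤ b → E a b) (hM : ∀ a : ℤ, M (a - 1) a) (a b : ℤ) : M a b :=
  Int.inductionOn' (motive := fun b => M a b) b (a + 1) (by simpa using hM (a + 1))
    (fun k hk ih => M2 a k (hE_of_le _ _ hk) ih)
    (fun k _ ih => M1 a (k - 1) (by rwa [sub_add_cancel]))

theorem E_everywhere (E1 : ∀ a b : ℤ, E a b → E a (b + 1))
    (E2 : ∀ a b : ℤ, M (a - 1) (b + 1) → E a (b + 1) → E a b)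
    (hE : ∀ a : ℤ, E a a) (hM : ∀ a b : ℤ, M a b) (a b : ℤ) : E a b :=
  Int.inductionOn' (motive := fun b => E a b) b a (hE a) (fun k _ => E1 a k)
    (fun k _ ih => E2 a (k - 1) (hM _ _) (by rwa [sub_add_cancel]))

end DoubleInduction

/-- The double induction underlying the regular-representation Whitehead lemma. -/
theorem stmt8 (E M : ℤ → ℤ → Prop)
    (M1 : ∀ a b : ℤ, M a (b + 1) → M a b)
    (M2 : ∀ a b : ℤ, E (a + 1) b → M a b → M a (b + 1))
    (E1 : ∀ a b : ℤ, E a b → E a (b + 1))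
    (E2 : ∀ a b : ℤ, M (a - 1) (b + 1) → E a (b + 1) → E a b)
    (hE : ∀ a : ℤ, E a a) (hM : ∀ a : ℤ, M (a - 1) a) :
    ∀ a b : ℤ, E a b ∧ M a b := by
  have hM_all : ∀ a b : ℤ, M a b :=
    M_everywhere M1 M2 (fun _ _ => E_of_le E1 hE) hM
  exact fun a b => ⟨E_everywhere E1 E2 hE hM_all a b, hM_all a b⟩
end
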